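/- For d ≥ 5, the constant c_d = (2π)^{−d} ∫_{[−π,π]^d} Φ(φ)^{−2} dφ is finite and positive, and lim_{λ→0+} (I(0) − I(λ))/λ = c_d; that is, I(λ) = I(0) − c_d λ + o(λ) as λ → 0+. -/

import Mathlib

open MeasureTheory Real Filter
open scoped ENNReal

noncomputable section

/-- The Fourier symbol `Φ(φ) = 2 ∑_j (1 - cos φ_j)` of the negative discrete Laplacian on `ℤ^d`. -/
def Phi (d : ℕ) (φ : Fin d → ℝ) : ℝ := 2 * ∑ j, (1 - Real.cos (φ j))

/-- The cube `[-π, π]^d`. -/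
def cube (d : ℕ) : Set (Fin d → ℝ) := Set.univ.pi fun _ => Set.Icc (-π) π

/-- `I(λ) = (2π)^{-d} ∫_{[-π,π]^d} (λ + Φ(φ))⁻¹ dφ` (Bochner integral, real-valued). -/
def Ir (d : ℕ) (lam : ℝ) : ℝ := ((2 * π) ^ d)⁻¹ * ∫ φ in cube d, (lam + Phi d φ)⁻¹

/-- The constant `c_d = (2π)^{-d} ∫_{[-π,π]^d} Φ(φ)^{-2} dφ`. -/
def cd (d : ℕ) : ℝ := ((2 * π) ^ d)⁻¹ * ∫ φ in cube d, ((Phi d φ) ^ 2)⁻¹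

/-! On the cube, `1 - cos t ≥ 2t²/π²` gives `Φ(φ) ≥ (4/π²)‖φ‖²`, so `Φ^{-k}` is dominated by a
multiple of `‖φ‖^{-2k}`, which is integrable near the origin as soon as `2k < d`. The resolvent
identity `Φ⁻¹ - (λ + Φ)⁻¹ = λ (Φ (λ + Φ))⁻¹` turns the difference quotient `(I(0) - I(λ))/λ` into
`∫ (Φ (λ + Φ))⁻¹`, whose integrand increases to `Φ^{-2}` as `λ → 0+`; dominated convergence
finishes the proof. -/

open Set

lemma continuous_Phi (d : ℕ) : Continuous (Phi d) := by
  unfold Phi; fun_prop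

lemma Phi_nonneg (d : ℕ) (φ : Fin d → ℝ) : 0 ≤ Phi d φ :=
  mul_nonneg zero_le_two (Finset.sum_nonneg fun _ _ => sub_nonneg.2 (cos_le_one _))

lemma measurableSet_cube (d : ℕ) : MeasurableSet (cube d) :=
  MeasurableSet.univ_pi fun _ => measurableSet_Icc

lemma isCompact_cube (d : ℕ) : IsCompact (cube d) :=
  isCompact_univ_pi fun _ => isCompact_Icc

lemma volume_cube_pos (d : ℕ) : 0 < volume (cube d) := by
  rw [cube, volume_pi_pi]
  simpa [Real.volume_Icc] using ENNReal.pow_pos (ENNReal.ofReal_pos.2 (by positivity)) d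

lemma sq_norm_le_sum_sq {ι : Type*} [Fintype ι] (x : ι → ℝ) : ‖x‖ ^ 2 ≤ ∑ i, x i ^ 2 := by
  rw [← Real.le_sqrt (norm_nonneg x) (by positivity)]
  exact (pi_norm_le_iff_of_nonneg (Real.sqrt_nonneg _)).2 fun i =>
    Real.abs_le_sqrt (Finset.single_le_sum (fun j _ => sq_nonneg (x j)) (Finset.mem_univ i))

lemma mul_sq_norm_le_Phi {d : ℕ} {φ : Fin d → ℝ} (hφ : φ ∈ cube d) :
    4 / π ^ 2 * ‖φ‖ ^ 2 ≤ Phi d φ := by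
  have h_coord (j : Fin d) : 2 / π ^ 2 * φ j ^ 2 ≤ 1 - cos (φ j) := by
    have := cos_le_one_sub_mul_cos_sq (abs_le.2 (hφ j (mem_univ j)))
    linarith
  calc 4 / π ^ 2 * ‖φ‖ ^ 2 ≤ 4 / π ^ 2 * ∑ j, φ j ^ 2 := by
        gcongr
        exact sq_norm_le_sum_sq φ
    _ = 2 * ∑ j, 2 / π ^ 2 * φ j ^ 2 := by
        rw [← Finset.mul_sum]
        ring
    _ ≤ Phi d φ := by
        unfold Phi
        gcongr with j
        exact h_coord j

lemma inv_Phi_pow_le {d : ℕ} {φ : Fin d → ℝ} (hφ : φ ∈ cube d) (hφ0 : φ ≠ 0) (k : ℕ) :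
    (Phi d φ ^ k)⁻¹ ≤ (π ^ 2 / 4) ^ k * (‖φ‖ ^ (2 * k))⁻¹ := by
  have h_pos : 0 < 4 / π ^ 2 * ‖φ‖ ^ 2 :=
    mul_pos (by positivity) (pow_pos (norm_pos_iff.2 hφ0) 2)
  calc (Phi d φ ^ k)⁻¹ ≤ ((4 / π ^ 2 * ‖φ‖ ^ 2) ^ k)⁻¹ :=
        inv_anti₀ (pow_pos h_pos k) (pow_le_pow_left₀ h_pos.le (mul_sq_norm_le_Phi hφ) k)
    _ = (π ^ 2 / 4) ^ k * (‖φ‖ ^ (2 * k))⁻¹ := by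
        rw [mul_pow, ← pow_mul, mul_inv, ← inv_pow, inv_div]

-- `Φ` vanishes again on `(2πℤ)^d`, so only its restriction to the cube obeys the decay bound.
lemma integrableOn_inv_Phi_pow {d k : ℕ} (hk : 2 * k < d) :
    IntegrableOn (fun φ => (Phi d φ ^ k)⁻¹) (cube d) := by
  set f := (cube d).indicator fun φ => (Phi d φ ^ k)⁻¹
  have h_meas : AEStronglyMeasurable f volume :=
    (((continuous_Phi d).measurable.pow_const k).inv.indicator
      (measurableSet_cube d)).aestronglyMeasurable
  have h_decay : ∀ᵐ φ, ‖f φ‖ ≤ (π ^ 2 / 4) ^ k * ‖φ‖ ^ (-((2 * k : ℕ) : ℝ)) := by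
    have : NeZero d := ⟨by omega⟩
    filter_upwards [Measure.ae_ne volume 0] with φ hφ0
    by_cases hφ : φ ∈ cube d
    · rw [show f φ = _ from indicator_of_mem hφ _,
        norm_of_nonneg (inv_nonneg.2 (pow_nonneg (Phi_nonneg d φ) k)),
        Real.rpow_neg (norm_nonneg φ), Real.rpow_natCast]
      exact inv_Phi_pow_le hφ hφ0 k
    · rw [show f φ = 0 from indicator_of_notMem hφ _, norm_zero]
      positivity
  have h_loc : LocallyIntegrable f volume :=
    locallyIntegrable_of_norm_le_rpow (by simp; omega)
      (by rw [Module.finrank_fin_fun]; exact_mod_cast hk) h_decay h_meas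
  exact (h_loc.integrableOn_isCompact (isCompact_cube d)).congr_fun
    (fun φ hφ => indicator_of_mem hφ _) (measurableSet_cube d)

lemma ae_restrict_cube_Phi_pos {d : ℕ} [NeZero d] :
    ∀ᵐ φ ∂volume.restrict (cube d), 0 < Phi d φ := by
  filter_upwards [ae_restrict_mem (measurableSet_cube d),
    ae_restrict_of_ae (Measure.ae_ne volume 0)] with φ hφ hφ0
  have := norm_pos_iff.2 hφ0
  exact lt_of_lt_of_le (by positivity) (mul_sq_norm_le_Phi hφ)

lemma integral_pos_of_ae_pos {α : Type*} [MeasurableSpace α] {μ : Measure α} (hμ : μ ≠ 0)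
    {g : α → ℝ} (hg : Integrable g μ) (h_pos : ∀ᵐ x ∂μ, 0 < g x) : 0 < ∫ x, g x ∂μ := by
  have h_null : μ (Function.support g)ᶜ = 0 := ae_iff.1 (h_pos.mono fun _ => ne_of_gt)
  rw [integral_pos_iff_support_of_nonneg_ae (h_pos.mono fun _ => le_of_lt) hg,
    measure_congr (ae_eq_univ.2 h_null)]
  exact Measure.measure_univ_pos.2 hμ

lemma cd_pos {d : ℕ} (hd : 4 < d) : 0 < cd d := by
  have : NeZero d := ⟨by omega⟩
  refine mul_pos (by positivity) (integral_pos_of_ae_pos ?_ (integrableOn_inv_Phi_pow (k := 2) hd)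
    (ae_restrict_cube_Phi_pos.mono fun φ hφ => by positivity))
  rw [Ne, Measure.restrict_eq_zero]
  exact (volume_cube_pos d).ne'

section Resolvent

variable {α : Type*} [MeasurableSpace α] {μ : Measure α} {f : α → ℝ}

lemma integral_inv_sub_integral_inv_add (hf_meas : AEMeasurable f μ)
    (hf_pos : ∀ᵐ x ∂μ, 0 < f x) (hf_int : Integrable (fun x => (f x)⁻¹) μ) {lam : ℝ}
    (hlam : 0 < lam) :
    ∫ x, (f x)⁻¹ ∂μ - ∫ x, (lam + f x)⁻¹ ∂μ = lam * ∫ x, (f x * (lam + f x))⁻¹ ∂μ := by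
  have h_int : Integrable (fun x => (lam + f x)⁻¹) μ :=
    hf_int.mono' (hf_meas.const_add lam).inv.aestronglyMeasurable <| hf_pos.mono fun x hx => by
      rw [norm_of_nonneg (by positivity)]
      exact inv_anti₀ hx (by linarith)
  rw [← integral_sub hf_int h_int, ← integral_const_mul]
  refine integral_congr_ae (hf_pos.mono fun x hx => ?_)
  field_simp
  ring

lemma tendsto_integral_inv_sub_integral_inv_add_div (hf_meas : AEMeasurable f μ)
    (hf_pos : ∀ᵐ x ∂μ, 0 < f x) (hf_int : Integrable (fun x => (f x)⁻¹) μ)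
    (hf_int_sq : Integrable (fun x => (f x ^ 2)⁻¹) μ) :
    Tendsto (fun lam => (∫ x, (f x)⁻¹ ∂μ - ∫ x, (lam + f x)⁻¹ ∂μ) / lam)
      (nhdsWithin 0 (Ioi 0)) (nhds (∫ x, (f x ^ 2)⁻¹ ∂μ)) := by
  have h_lim : Tendsto (fun lam => ∫ x, (f x * (lam + f x))⁻¹ ∂μ)
      (nhdsWithin 0 (Ioi 0)) (nhds (∫ x, (f x ^ 2)⁻¹ ∂μ)) := by
    refine tendsto_integral_filter_of_dominated_convergence _
      (Eventually.of_forall fun lam =>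
        (hf_meas.mul (hf_meas.const_add lam)).inv.aestronglyMeasurable)
      ?_ hf_int_sq ?_
    · filter_upwards [self_mem_nhdsWithin] with lam (hlam : 0 < lam)
      filter_upwards [hf_pos] with x hx
      rw [norm_of_nonneg (by positivity)]
      exact inv_anti₀ (by positivity) (by nlinarith)
    · filter_upwards [hf_pos] with x hx
      have h_cont : Tendsto (fun lam => f x * (lam + f x)) (nhds 0) (nhds (f x * (0 + f x))) :=
        (continuous_const.mul (continuous_id.add continuous_const)).tendsto 0
      simpa [sq] using (h_cont.inv₀ (by positivity)).mono_left nhdsWithin_le_nhds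
  refine h_lim.congr' (eventually_nhdsWithin_of_forall fun lam (hlam : 0 < lam) => ?_)
  dsimp only
  rw [integral_inv_sub_integral_inv_add hf_meas hf_pos hf_int hlam, mul_div_cancel_left₀ _ hlam.ne']

end Resolvent

/-- for `d ≥ 5`, the constant `c_d = (2π)^{-d} ∫ Φ(φ)^{-2} dφ` is finite and
positive, and `I(λ) = I(0) - c_d λ + o(λ)` as `λ → 0+`, i.e. `(I(0) - I(λ))/λ → c_d`. -/
theorem I_asymptotics_high_dim (d : ℕ) (hd : 5 ≤ d) :
    IntegrableOn (fun φ => ((Phi d φ) ^ 2)⁻¹) (cube d) ∧ 0 < cd d ∧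
      Tendsto (fun lam : ℝ => (Ir d 0 - Ir d lam) / lam)
        (nhdsWithin 0 (Set.Ioi 0)) (nhds (cd d)) := by
  have : NeZero d := ⟨by omega⟩
  have h_int : IntegrableOn (fun φ => (Phi d φ)⁻¹) (cube d) := by
    simpa using integrableOn_inv_Phi_pow (d := d) (k := 1) (by omega)
  have h_int_sq := integrableOn_inv_Phi_pow (d := d) (k := 2) (by omega)
  refine ⟨h_int_sq, cd_pos (by omega), ?_⟩
  refine ((tendsto_integral_inv_sub_integral_inv_add_div (continuous_Phi d).aemeasurable
    ae_restrict_cube_Phi_pos h_int h_int_sq).const_mul ((2 * π) ^ d)⁻¹).congr fun lam => ?_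
  simp only [Ir, zero_add]
  ring
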